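/- For all real d×d positive semidefinite matrices A, B, and C, the Bures distance d_B(A,B) = (Tr[A + B − 2 (A^{1/2} B A^{1/2})^{1/2}])^{1/2} satisfies the triangle inequality d_B(A,C) ≤ d_B(A,B) + d_B(B,C). -/

import Mathlib

open MeasureTheory ProbabilityTheory Matrix
open scoped Classical

/-- The unique positive semidefinite square root of a positive semidefinite real matrix
(junk value `0` if the matrix is not positive semidefinite). -/
noncomputable def psdSqrt {d : ℕ} (M : Matrix (Fin d) (Fin d) ℝ) : Matrix (Fin d) (Fin d) ℝ :=
  if h : M.PosSemidef then
    (h.1.eigenvectorUnitary : Matrix (Fin d) (Fin d) ℝ) *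
      diagonal ((↑) ∘ Real.sqrt ∘ h.1.eigenvalues) *
      (star h.1.eigenvectorUnitary : Matrix (Fin d) (Fin d) ℝ)
  else 0

/-- The squared Bures distance `Tr[A + B − 2 (A^{1/2} B A^{1/2})^{1/2}]`. -/
noncomputable def buresSq {d : ℕ} (A B : Matrix (Fin d) (Fin d) ℝ) : ℝ :=
  (A + B - 2 • psdSqrt (psdSqrt A * B * psdSqrt A)).trace

/-!
By polar decomposition every square matrix is `M = V √(Mᴴ M)` with `V` orthogonal, and
`tr (U S) ≤ tr S` for `S ⪰ 0` and `U` orthogonal, so `tr √(Mᴴ M)` is the maximum of `tr (U M)`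
over orthogonal `U`. Since `‖√A - U √B‖²_F = tr A + tr B - 2 tr (U √B √A)` and
`(√B √A)ᴴ (√B √A) = √A B √A`, this makes `d_B(A, B)` the minimum of `‖√A - U √B‖_F` over
orthogonal `U`. If `U` is optimal for `(A, B)` and `V` for `(B, C)`, testing `U V` for `(A, C)`
and using the triangle inequality and left orthogonal invariance of the Frobenius norm gives
the claim.
-/

open scoped ComplexOrder MatrixOrder Matrix.Norms.Frobenius

theorem LinearMap.exists_linearIsometry_comp_eq_of_norm_eq {𝕜 E G : Type*} [RCLike 𝕜]
    [NormedAddCommGroup E] [InnerProductSpace 𝕜 E] [FiniteDimensional 𝕜 E]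
    [AddCommGroup G] [Module 𝕜 G] {S T : G →ₗ[𝕜] E} (h : ∀ x, ‖T x‖ = ‖S x‖) :
    ∃ W : E →ₗᵢ[𝕜] E, W.toLinearMap ∘ₗ S = T := by
  have hker : ker S ≤ ker T := fun x hx => by
    rw [mem_ker, ← norm_eq_zero, h, norm_eq_zero]; exact hx
  let L₀ : range S →ₗ[𝕜] E := (ker S).liftQ T hker ∘ₗ S.quotKerEquivRange.symm.toLinearMap
  have hL₀ (x : G) : L₀ ⟨S x, mem_range_self S x⟩ = T x := by
    simp [L₀, quotKerEquivRange_symm_apply_image]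
  let L : range S →ₗᵢ[𝕜] E := ⟨L₀, by rintro ⟨_, x, rfl⟩; simp [hL₀, h]⟩
  exact ⟨L.extend, ext fun x => (L.extend_apply ⟨S x, mem_range_self S x⟩).trans (hL₀ x)⟩

namespace Matrix

variable {n : Type*} [Fintype n]

theorem frobenius_norm_sq_eq_trace {m : Type*} [Fintype m] (A : Matrix m n ℝ) :
    ‖A‖ ^ 2 = (Aᴴ * A).trace := by
  rw [frobenius_norm_def, ← star_vec_dotProduct_vec, ← Real.sqrt_eq_rpow,
    Real.sq_sqrt (by positivity)]
  simp [dotProduct, vec, ← Finset.univ_product_univ, Finset.sum_product_right, sq]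

variable [DecidableEq n]

theorem exists_mem_unitaryGroup_mul_eq_of_conjTranspose_mul_self_eq {𝕜 : Type*} [RCLike 𝕜]
    {A B : Matrix n n 𝕜} (h : Aᴴ * A = Bᴴ * B) : ∃ U ∈ unitaryGroup n 𝕜, U * B = A := by
  have hnorm (x : EuclideanSpace 𝕜 n) : ‖toEuclideanLin A x‖ = ‖toEuclideanLin B x‖ := by
    have key (M : Matrix n n 𝕜) :
        ‖toEuclideanLin M x‖ ^ 2 = RCLike.re (inner 𝕜 x (toEuclideanLin (Mᴴ * M) x)) := by
      rw [toLpLin_mul_same, toEuclideanLin_conjTranspose_eq_adjoint, LinearMap.comp_apply,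
        LinearMap.adjoint_inner_right, ← norm_sq_eq_re_inner (𝕜 := 𝕜)]
    rw [← sq_eq_sq₀ (norm_nonneg _) (norm_nonneg _), key, key, h]
  obtain ⟨W, hW⟩ := LinearMap.exists_linearIsometry_comp_eq_of_norm_eq hnorm
  refine ⟨toEuclideanLin.symm W.toLinearMap, ?_, ?_⟩
  · rw [mem_unitaryGroup_iff']
    apply toEuclideanLin.injective
    rw [toLpLin_mul_same, star_eq_conjTranspose, toEuclideanLin_conjTranspose_eq_adjoint,
      LinearEquiv.apply_symm_apply, W.adjoint_comp_self', toLpLin_one]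
  · apply toEuclideanLin.injective
    rw [toLpLin_mul_same, LinearEquiv.apply_symm_apply, hW]

theorem exists_mem_unitaryGroup_mul_sqrt_eq {𝕜 : Type*} [RCLike 𝕜] (M : Matrix n n 𝕜) :
    ∃ U ∈ unitaryGroup n 𝕜, U * CFC.sqrt (Mᴴ * M) = M := by
  apply exists_mem_unitaryGroup_mul_eq_of_conjTranspose_mul_self_eq
  rw [(CFC.sqrt_nonneg (Mᴴ * M)).posSemidef.isHermitian.eq,
    CFC.sqrt_mul_sqrt_self _ (posSemidef_conjTranspose_mul_self M).nonneg]

theorem frobenius_norm_unitary_mul {m : Type*} [Fintype m] {U : Matrix n n ℝ}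
    (hU : U ∈ unitaryGroup n ℝ) (A : Matrix n m ℝ) : ‖U * A‖ = ‖A‖ := by
  rw [← sq_eq_sq₀ (norm_nonneg _) (norm_nonneg _), frobenius_norm_sq_eq_trace,
    frobenius_norm_sq_eq_trace, conjTranspose_mul, Matrix.mul_assoc, ← Matrix.mul_assoc Uᴴ,
    ← star_eq_conjTranspose, Unitary.star_mul_self_of_mem hU, Matrix.one_mul]

theorem frobenius_norm_sub_unitary_mul_sq {X Y U : Matrix n n ℝ} (hX : X.IsHermitian)
    (hY : Y.IsHermitian) (hU : U ∈ unitaryGroup n ℝ) :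
    ‖X - U * Y‖ ^ 2 = (X * X).trace + (Y * Y).trace - 2 * (U * (Y * X)).trace := by
  have hUU : Uᴴ * U = 1 := Unitary.star_mul_self_of_mem hU
  have hexp : (X - U * Y)ᴴ * (X - U * Y)
      = X * X + Y * (Uᴴ * U) * Y - X * (U * Y) - (X * (U * Y))ᴴ := by
    simp only [conjTranspose_sub, conjTranspose_mul, hX.eq, hY.eq]
    noncomm_ring
  rw [frobenius_norm_sq_eq_trace, hexp, hUU, Matrix.mul_one, trace_sub, trace_sub, trace_add,
    trace_conjTranspose, star_trivial, trace_mul_comm X (U * Y), Matrix.mul_assoc U]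
  ring

theorem PosSemidef.trace_unitary_mul_le {S U : Matrix n n ℝ} (hS : S.PosSemidef)
    (hU : U ∈ unitaryGroup n ℝ) : (U * S).trace ≤ S.trace := by
  have hR := (CFC.sqrt_nonneg S).posSemidef.isHermitian
  have := frobenius_norm_sub_unitary_mul_sq hR hR hU
  rw [CFC.sqrt_mul_sqrt_self S hS.nonneg] at this
  nlinarith [sq_nonneg ‖CFC.sqrt S - U * CFC.sqrt S‖]

theorem isGreatest_trace_unitary_mul (M : Matrix n n ℝ) :
    IsGreatest {t | ∃ U ∈ unitaryGroup n ℝ, (U * M).trace = t} (CFC.sqrt (Mᴴ * M)).trace := by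
  obtain ⟨V, hV, hVM⟩ := exists_mem_unitaryGroup_mul_sqrt_eq M
  refine ⟨⟨star V, Unitary.star_mem hV, ?_⟩, ?_⟩
  · conv_lhs => rw [← hVM, ← Matrix.mul_assoc, Unitary.star_mul_self_of_mem hV, Matrix.one_mul]
  · rintro _ ⟨U, hU, rfl⟩
    conv_lhs => rw [← hVM, ← Matrix.mul_assoc]
    exact (CFC.sqrt_nonneg _).posSemidef.trace_unitary_mul_le (mul_mem hU hV)

end Matrix

section Bures

variable {d : ℕ} {A B : Matrix (Fin d) (Fin d) ℝ}

theorem psdSqrt_eq_sqrt (hA : A.PosSemidef) : psdSqrt A = CFC.sqrt A := by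
  rw [psdSqrt, dif_pos hA, CFC.sqrt_eq_real_sqrt A hA.nonneg, cfcₙ_eq_cfc, hA.1.cfc_eq]
  rfl

theorem buresSq_eq_trace_sub_trace_sqrt (hA : A.PosSemidef) (hB : B.PosSemidef) :
    buresSq A B = A.trace + B.trace
      - 2 * (CFC.sqrt ((CFC.sqrt B * CFC.sqrt A)ᴴ * (CFC.sqrt B * CFC.sqrt A))).trace := by
  have hX := (CFC.sqrt_nonneg A).posSemidef.isHermitian
  have hXBX : (CFC.sqrt B * CFC.sqrt A)ᴴ * (CFC.sqrt B * CFC.sqrt A)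
      = CFC.sqrt A * B * CFC.sqrt A := by
    rw [conjTranspose_mul, hX.eq, (CFC.sqrt_nonneg B).posSemidef.isHermitian.eq, Matrix.mul_assoc,
      ← Matrix.mul_assoc (CFC.sqrt B), CFC.sqrt_mul_sqrt_self B hB.nonneg, Matrix.mul_assoc]
  have hXBX_psd : (CFC.sqrt A * B * CFC.sqrt A).PosSemidef := by
    simpa only [hX.eq] using hB.mul_mul_conjTranspose_same (CFC.sqrt A)
  rw [buresSq, psdSqrt_eq_sqrt hA, psdSqrt_eq_sqrt hXBX_psd, hXBX, trace_sub, trace_add,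
    trace_smul, nsmul_eq_mul, Nat.cast_ofNat]

theorem isLeast_sqrt_buresSq (hA : A.PosSemidef) (hB : B.PosSemidef) :
    IsLeast {r | ∃ U ∈ unitaryGroup (Fin d) ℝ, ‖CFC.sqrt A - U * CFC.sqrt B‖ = r}
      √(buresSq A B) := by
  have hX := (CFC.sqrt_nonneg A).posSemidef.isHermitian
  have hY := (CFC.sqrt_nonneg B).posSemidef.isHermitian
  set M := CFC.sqrt B * CFC.sqrt A
  have hnorm {U} (hU : U ∈ unitaryGroup (Fin d) ℝ) : ‖CFC.sqrt A - U * CFC.sqrt B‖ ^ 2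
      = buresSq A B + 2 * ((CFC.sqrt (Mᴴ * M)).trace - (U * M).trace) := by
    rw [frobenius_norm_sub_unitary_mul_sq hX hY hU, CFC.sqrt_mul_sqrt_self A hA.nonneg,
      CFC.sqrt_mul_sqrt_self B hB.nonneg, buresSq_eq_trace_sub_trace_sqrt hA hB]
    ring
  obtain ⟨⟨U, hU, hUM⟩, hmax⟩ := isGreatest_trace_unitary_mul M
  refine ⟨⟨U, hU, ?_⟩, ?_⟩
  · rw [← Real.sqrt_sq (norm_nonneg _), hnorm hU, hUM, sub_self, mul_zero, add_zero]
  · rintro _ ⟨V, hV, rfl⟩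
    rw [Real.sqrt_le_left (norm_nonneg _), hnorm hV]
    linarith [hmax ⟨V, hV, rfl⟩]

end Bures

/-- the Bures distance `d_B(A,B) = (d_B²(A,B))^{1/2}` satisfies the triangle
inequality on PSD matrices. -/
theorem stmt4 (d : ℕ) (A B C : Matrix (Fin d) (Fin d) ℝ)
    (hA : A.PosSemidef) (hB : B.PosSemidef) (hC : C.PosSemidef) :
    Real.sqrt (buresSq A C) ≤ Real.sqrt (buresSq A B) + Real.sqrt (buresSq B C) := by
  obtain ⟨⟨U, hU, hAB⟩, -⟩ := isLeast_sqrt_buresSq hA hB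
  obtain ⟨⟨V, hV, hBC⟩, -⟩ := isLeast_sqrt_buresSq hB hC
  calc √(buresSq A C) ≤ ‖CFC.sqrt A - (U * V) * CFC.sqrt C‖ :=
        (isLeast_sqrt_buresSq hA hC).2 ⟨U * V, mul_mem hU hV, rfl⟩
    _ = ‖(CFC.sqrt A - U * CFC.sqrt B) + U * (CFC.sqrt B - V * CFC.sqrt C)‖ := by
        congr 1; noncomm_ring
    _ ≤ ‖CFC.sqrt A - U * CFC.sqrt B‖ + ‖U * (CFC.sqrt B - V * CFC.sqrt C)‖ := norm_add_le _ _
    _ = √(buresSq A B) + √(buresSq B C) := by rw [frobenius_norm_unitary_mul hU, hAB, hBC]
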